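/- For positive definite n×n complex matrices ρ₀ and ρ₁, Tr (ρ₀^{1/2}ρ₁ρ₀^{1/2})^{1/2} ≥ Tr (ρ₀#ρ₁), where ρ₀#ρ₁ is the geometric mean. Consequently the Bures distance 2√(Tr ρ₀ + Tr ρ₁ − 2 Tr (ρ₀^{1/2}ρ₁ρ₀^{1/2})^{1/2}) is at most 2√(Tr ρ₀ + Tr ρ₁ − 2 Tr ρ₀#ρ₁). -/

import Mathlib

open Matrix ComplexOrder

open Classical in
noncomputable def msqrt {n : ℕ} (A : Matrix (Fin n) (Fin n) ℂ) : Matrix (Fin n) (Fin n) ℂ :=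
  if h : A.PosSemidef then
    h.1.eigenvectorUnitary.1 * diagonal ((↑) ∘ (√·) ∘ h.1.eigenvalues) *
      (star h.1.eigenvectorUnitary : Matrix (Fin n) (Fin n) ℂ)
  else 0

noncomputable def geoMean {n : ℕ} (ρ₀ ρ₁ : Matrix (Fin n) (Fin n) ℂ) : Matrix (Fin n) (Fin n) ℂ :=
  msqrt ρ₀ * msqrt ((msqrt ρ₀)⁻¹ * ρ₁ * (msqrt ρ₀)⁻¹) * msqrt ρ₀

noncomputable def frobNorm {n : ℕ} (X : Matrix (Fin n) (Fin n) ℂ) : ℝ :=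
  Real.sqrt (Matrix.trace (Xᴴ * X)).re

lemma msqrt_spec {n : ℕ} {A : Matrix (Fin n) (Fin n) ℂ} (h : A.PosSemidef) :
    (msqrt A).PosSemidef ∧ msqrt A * msqrt A = A := by
  have hm : msqrt A = h.1.eigenvectorUnitary.1 * diagonal ((↑) ∘ (√·) ∘ h.1.eigenvalues) *
      (star h.1.eigenvectorUnitary : Matrix (Fin n) (Fin n) ℂ) := by
    rw [msqrt, dif_pos h]
  have hD : (diagonal (((↑) ∘ (√·) ∘ h.1.eigenvalues) : Fin n → ℂ)).PosSemidef := by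
    rw [posSemidef_diagonal_iff]
    intro i
    simp only [Function.comp_apply]
    exact_mod_cast Real.sqrt_nonneg _
  refine ⟨?_, ?_⟩
  · rw [hm, star_eq_conjTranspose]
    exact hD.mul_mul_conjTranspose_same _
  · rw [hm]
    conv_rhs => rw [h.1.spectral_theorem, Unitary.conjStarAlgAut_apply]
    have hu : (star h.1.eigenvectorUnitary : Matrix (Fin n) (Fin n) ℂ) *
        h.1.eigenvectorUnitary.1 = 1 := Unitary.coe_star_mul_self _
    have e : h.1.eigenvectorUnitary.1 * diagonal ((↑) ∘ (√·) ∘ h.1.eigenvalues) *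
        (star h.1.eigenvectorUnitary : Matrix (Fin n) (Fin n) ℂ) *
        (h.1.eigenvectorUnitary.1 * diagonal ((↑) ∘ (√·) ∘ h.1.eigenvalues) *
        (star h.1.eigenvectorUnitary : Matrix (Fin n) (Fin n) ℂ))
        = h.1.eigenvectorUnitary.1 * (diagonal ((↑) ∘ (√·) ∘ h.1.eigenvalues) *
          ((star h.1.eigenvectorUnitary : Matrix (Fin n) (Fin n) ℂ) *
          h.1.eigenvectorUnitary.1) * diagonal ((↑) ∘ (√·) ∘ h.1.eigenvalues)) *
        (star h.1.eigenvectorUnitary : Matrix (Fin n) (Fin n) ℂ) := by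
      simp only [mul_assoc]
    rw [e, hu, mul_one, diagonal_mul_diagonal]
    congr 3
    funext i
    simp only [Function.comp_apply]
    rw [← Complex.ofReal_mul, Real.mul_self_sqrt (h.eigenvalues_nonneg i)]
    rfl

lemma trace_conjTranspose_mul_self_re {n : ℕ} (X : Matrix (Fin n) (Fin n) ℂ) :
    (Matrix.trace (Xᴴ * X)).re = ∑ j, ∑ i, ‖X i j‖ ^ 2 := by
  simp only [Matrix.trace, Matrix.diag, Matrix.mul_apply, Matrix.conjTranspose_apply]
  rw [Complex.re_sum]
  refine Finset.sum_congr rfl fun j _ => ?_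
  rw [Complex.re_sum]
  refine Finset.sum_congr rfl fun i _ => ?_
  rw [Complex.star_def, Complex.conj_mul', ← Complex.ofReal_pow, Complex.ofReal_re]

lemma trace_mul_eq_sum {n : ℕ} (X Y : Matrix (Fin n) (Fin n) ℂ) :
    Matrix.trace (X * Y) = ∑ i, ∑ j, X i j * Y j i := by
  simp [Matrix.trace, Matrix.diag, Matrix.mul_apply]

lemma re_trace_unitary_mul_le {n : ℕ} {V P : Matrix (Fin n) (Fin n) ℂ}
    (hV : Vᴴ * V = 1) (hP : P.PosSemidef) :
    (Matrix.trace (V * P)).re ≤ (Matrix.trace P).re := by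
  set Q := msqrt P with hQdef
  have hQps : Q.PosSemidef := (msqrt_spec hP).1
  have hQh : Qᴴ = Q := hQps.1
  have hQQ : Q * Q = P := (msqrt_spec hP).2
  set t : ℝ := ∑ j, ∑ i, ‖Q i j‖ ^ 2 with ht
  have htr : (Matrix.trace P).re = t := by
    rw [← hQQ]
    have h2 : Q * Q = Qᴴ * Q := by rw [hQh]
    rw [h2, trace_conjTranspose_mul_self_re]
  have htnn : 0 ≤ t := Finset.sum_nonneg fun j _ =>
    Finset.sum_nonneg fun i _ => sq_nonneg _
  set x : EuclideanSpace ℂ (Fin n × Fin n) := WithLp.toLp 2 (fun p : Fin n × Fin n => Q p.1 p.2) with hx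
  set y : EuclideanSpace ℂ (Fin n × Fin n) := WithLp.toLp 2 (fun p : Fin n × Fin n => (V * Q) p.1 p.2) with hy
  have hnx : ‖x‖ = Real.sqrt t := by
    rw [EuclideanSpace.norm_eq]
    congr 1
    show (∑ p : Fin n × Fin n, ‖Q p.1 p.2‖ ^ 2) = t
    rw [Fintype.sum_prod_type, ht]
    exact Finset.sum_comm
  have hny : ‖y‖ = Real.sqrt t := by
    rw [EuclideanSpace.norm_eq]
    congr 1
    show (∑ p : Fin n × Fin n, ‖(V * Q) p.1 p.2‖ ^ 2) = t
    rw [Fintype.sum_prod_type]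
    have h3 : (∑ j, ∑ i, ‖(V * Q) i j‖ ^ 2) = ((V * Q)ᴴ * (V * Q)).trace.re :=
      (trace_conjTranspose_mul_self_re _).symm
    have h4 : (V * Q)ᴴ * (V * Q) = Qᴴ * Q := by
      rw [conjTranspose_mul, mul_assoc, ← mul_assoc Vᴴ, hV, one_mul]
    rw [Finset.sum_comm, h3, h4, trace_conjTranspose_mul_self_re, ht]
  have hconjQ : ∀ i j, (starRingEnd ℂ) (Q i j) = Q j i := by
    intro i j
    have := congrFun (congrFun hQh j) i
    rw [Matrix.conjTranspose_apply] at this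
    exact this
  have hinner : (inner ℂ x y : ℂ) = Matrix.trace (V * P) := by
    rw [PiLp.inner_apply]
    rw [← hQQ, ← mul_assoc, trace_mul_eq_sum]
    rw [Fintype.sum_prod_type]
    refine Finset.sum_congr rfl fun i _ => Finset.sum_congr rfl fun j _ => ?_
    simp only [RCLike.inner_apply]
    show (V * Q) i j * (starRingEnd ℂ) (Q i j) = (V * Q) i j * Q j i
    rw [hconjQ]
  calc (Matrix.trace (V * P)).re = RCLike.re (inner ℂ x y : ℂ) := by rw [hinner]; rfl
    _ ≤ ‖x‖ * ‖y‖ := re_inner_le_norm x y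
    _ = t := by rw [hnx, hny, Real.mul_self_sqrt htnn]
    _ = (Matrix.trace P).re := htr.symm

lemma posDef_conj {n : ℕ} {M B : Matrix (Fin n) (Fin n) ℂ}
    (hM : M.PosDef) (hB : IsUnit B.det) : (Bᴴ * M * B).PosDef := by
  refine posDef_iff_dotProduct_mulVec.2 ⟨isHermitian_conjTranspose_mul_mul B hM.1, fun v hv => ?_⟩
  have hinj : Function.Injective (B.mulVec) := mulVec_injective_iff_isUnit.2
    (isUnit_iff_isUnit_det _ |>.2 hB)
  have hBv : B *ᵥ v ≠ 0 := fun hz => hv (hinj (by simpa using hz))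
  have key : dotProduct (star v) ((Bᴴ * M * B) *ᵥ v)
      = dotProduct (star (B *ᵥ v)) (M *ᵥ (B *ᵥ v)) := by
    rw [star_mulVec, ← mulVec_mulVec, ← mulVec_mulVec, dotProduct_mulVec]
  rw [key]
  exact (posDef_iff_dotProduct_mulVec.1 hM).2 hBv

theorem trace_sqrt_ge_trace_geoMean {n : ℕ} (ρ₀ ρ₁ : Matrix (Fin n) (Fin n) ℂ)
    (h₀ : ρ₀.PosDef) (h₁ : ρ₁.PosDef) :
    (Matrix.trace (geoMean ρ₀ ρ₁)).re ≤ (Matrix.trace (msqrt (msqrt ρ₀ * ρ₁ * msqrt ρ₀))).re ∧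
    2 * Real.sqrt ((Matrix.trace ρ₀).re + (Matrix.trace ρ₁).re
        - 2 * (Matrix.trace (msqrt (msqrt ρ₀ * ρ₁ * msqrt ρ₀))).re)
      ≤ 2 * Real.sqrt ((Matrix.trace ρ₀).re + (Matrix.trace ρ₁).re
        - 2 * (Matrix.trace (geoMean ρ₀ ρ₁)).re) := by
  have hA0 := h₀.posSemidef
  set A := msqrt ρ₀ with hAdef
  have hmA : msqrt ρ₀ = A := rfl
  have hAps : A.PosSemidef := (msqrt_spec hA0).1
  have hAh : Aᴴ = A := hAps.1
  have hAA : A * A = ρ₀ := (msqrt_spec hA0).2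
  have hρdet : IsUnit ρ₀.det := isUnit_iff_ne_zero.2 (ne_of_gt h₀.det_pos)
  have hAdet : IsUnit A.det := by
    have : A.det * A.det = ρ₀.det := by rw [← det_mul, hAA]
    exact isUnit_of_mul_isUnit_left (this ▸ hρdet)
  have hAinvdet : IsUnit A⁻¹.det := A.isUnit_nonsing_inv_det hAdet
  have hC : (A⁻¹ * ρ₁ * A⁻¹).PosDef := by
    have h := posDef_conj h₁ hAinvdet
    rwa [conjTranspose_nonsing_inv, hAh] at h
  set S := msqrt (A⁻¹ * ρ₁ * A⁻¹) with hSdef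
  have hmC : msqrt (A⁻¹ * ρ₁ * A⁻¹) = S := rfl
  have hSh : Sᴴ = S := (msqrt_spec hC.posSemidef).1.1
  have hSS : S * S = A⁻¹ * ρ₁ * A⁻¹ := (msqrt_spec hC.posSemidef).2
  have hgeo : geoMean ρ₀ ρ₁ = A * S * A := by rw [geoMean, hmA, hmC]
  have hMpd : (A * ρ₁ * A).PosDef := by
    have h := posDef_conj h₁ hAdet
    rwa [hAh] at h
  have hMps := hMpd.posSemidef
  set T := msqrt (A * ρ₁ * A) with hTdef
  have hmM : msqrt (msqrt ρ₀ * ρ₁ * msqrt ρ₀) = T := rfl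
  have hTps : T.PosSemidef := (msqrt_spec hMps).1
  have hTh : Tᴴ = T := hTps.1
  have hTT : T * T = A * ρ₁ * A := (msqrt_spec hMps).2
  have hTdet : IsUnit T.det := by
    have h2 : T.det * T.det = (A * ρ₁ * A).det := by rw [← det_mul, hTT]
    have : IsUnit (A * ρ₁ * A).det := isUnit_iff_ne_zero.2 (ne_of_gt hMpd.det_pos)
    exact isUnit_of_mul_isUnit_left (h2 ▸ this)
  set V := S * ρ₀ * T⁻¹ with hVdef
  have hVT : V * T = S * ρ₀ := by
    rw [hVdef, mul_assoc, nonsing_inv_mul T hTdet, mul_one]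
  have hρAinv : ρ₀ * A⁻¹ = A := by
    rw [← hAA, mul_assoc, mul_nonsing_inv A hAdet, mul_one]
  have hAinvρ : A⁻¹ * ρ₀ = A := by
    rw [← hAA, ← mul_assoc, nonsing_inv_mul A hAdet, one_mul]
  have hmid : (ρ₀ * S) * (S * ρ₀) = T * T := by
    have h2 : (ρ₀ * S) * (S * ρ₀) = ρ₀ * (S * S) * ρ₀ := by
      simp only [mul_assoc]
    rw [h2, hSS, hTT]
    calc ρ₀ * (A⁻¹ * ρ₁ * A⁻¹) * ρ₀
        = (ρ₀ * A⁻¹) * ρ₁ * (A⁻¹ * ρ₀) := by simp only [mul_assoc]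
      _ = A * ρ₁ * A := by rw [hρAinv, hAinvρ]
  have hVh : Vᴴ = T⁻¹ * (ρ₀ * S) := by
    rw [hVdef]
    simp only [conjTranspose_mul]
    rw [conjTranspose_nonsing_inv, hTh, h₀.1, hSh]
  have hunit : Vᴴ * V = 1 := by
    rw [hVh, hVdef]
    have h2 : T⁻¹ * (ρ₀ * S) * (S * ρ₀ * T⁻¹) = T⁻¹ * ((ρ₀ * S) * (S * ρ₀)) * T⁻¹ := by
      simp only [mul_assoc]
    rw [h2, hmid, ← mul_assoc, nonsing_inv_mul T hTdet, one_mul,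
      mul_nonsing_inv T hTdet]
  have htrace : Matrix.trace (geoMean ρ₀ ρ₁) = Matrix.trace (V * T) := by
    rw [hgeo, hVT, Matrix.trace_mul_cycle, hAA, Matrix.trace_mul_comm]
  have part1 : (Matrix.trace (geoMean ρ₀ ρ₁)).re
      ≤ (Matrix.trace (msqrt (msqrt ρ₀ * ρ₁ * msqrt ρ₀))).re := by
    rw [htrace, hmM]
    exact re_trace_unitary_mul_le hunit hTps
  refine ⟨part1, ?_⟩
  have h2 : (Matrix.trace ρ₀).re + (Matrix.trace ρ₁).re
      - 2 * (Matrix.trace (msqrt (msqrt ρ₀ * ρ₁ * msqrt ρ₀))).re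
      ≤ (Matrix.trace ρ₀).re + (Matrix.trace ρ₁).re
      - 2 * (Matrix.trace (geoMean ρ₀ ρ₁)).re := by linarith
  exact mul_le_mul_of_nonneg_left (Real.sqrt_le_sqrt h2) (by norm_num)
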